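/- Let q ≥ 2 and a > 0 be real numbers, let w be a positive integer, and let δ > 0. Suppose f(u) = Σ_{n≥0} b_n u^n (with b_n ∈ ℂ) converges for all complex u with |u| < q^{−a}, that g and h are analytic on the disc {u ∈ ℂ : |u| < q^{−(a−δ)}}, that f(u) = g(u)·(u − q^{−a})^{−w} + h(u) for all |u| < q^{−a}, and that g(q^{−a}) ≠ 0. Then for every ε > 0, b_n = q^{an}·Q(n) + O(q^{(a−δ+ε)n}) as n → ∞, where Q is the degree-(w−1) polynomial Q(X) = Σ_{j=0}^{w−2} [(−1)^{w−j}·g^{(j)}(q^{−a})/(j!·(w−j−1)!)]·[∏_{k=1}^{w−j−1}(X+k)]·q^{a(w−j)} − [g^{(w−1)}(q^{−a})/(w−1)!]·q^{a}. In particular the leading coefficient of Q is (−1)^{w}·g(q^{−a})·q^{aw}/(w−1)!. -/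

import Mathlib

/-!
Write `z₀ = q^{-a}`. Expanding `g` to order `w` at `z₀` with iterated divided differences,
`g u (u - z₀)^{-w}` splits as the principal part `∑_{j<w} g^{(j)}(z₀)/j! · (u - z₀)^{-(w-j)}`
plus a function holomorphic on the whole disc `|u| < q^{-(a-δ)}`. The Taylor coefficients of the
principal part are explicit binomial expressions, which give `q^{an} Q(n)`; the coefficients of
the holomorphic remainder `h + (remainder of g)` are `O(ρ^{-n})` for every `ρ < q^{-(a-δ)}` by
the Cauchy estimates, and `ρ = q^{-(a-δ+ε)}` gives the error term.
-/

open Filter Asymptotics Topology Finset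

theorem Nat.choose_mul_factorial_eq_prod_Icc (n m : ℕ) :
    (n + m).choose m * m.factorial = ∏ k ∈ Icc 1 m, (n + k) := by
  rw [mul_comm, ← Nat.ascFactorial_eq_factorial_mul_choose, Nat.ascFactorial_eq_prod_range,
    ← Ico_add_one_right_eq_Icc, ← prod_Ico_add' (fun k => n + k) 0 m 1, Nat.Ico_zero_eq_range]
  simp only [add_assoc, add_comm 1]

section Taylor

variable {𝕜 E : Type*} [NontriviallyNormedField 𝕜] [NormedAddCommGroup E] [NormedSpace 𝕜 E]

theorem eq_sum_iterate_dslope_add (g : 𝕜 → E) (z₀ u : 𝕜) (k : ℕ) :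
    g u = ∑ j ∈ range k, (u - z₀) ^ j • (Function.swap dslope z₀)^[j] g z₀ +
      (u - z₀) ^ k • (Function.swap dslope z₀)^[k] g u := by
  induction k with
  | zero => simp
  | succ k ih =>
    rw [ih, sum_range_succ, Function.iterate_succ_apply', pow_succ, mul_smul,
      show Function.swap dslope z₀ ((Function.swap dslope z₀)^[k] g) u =
        dslope ((Function.swap dslope z₀)^[k] g) z₀ u from rfl,
      sub_smul_dslope, add_assoc, smul_sub, add_sub_cancel]

theorem inv_pow_smul_eq_sum_add_iterate_dslope (g : 𝕜 → E) {z₀ u : 𝕜} (hu : u ≠ z₀) (w : ℕ) :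
    ((u - z₀) ^ w)⁻¹ • g u =
      ∑ j ∈ range w, ((u - z₀) ^ (w - j))⁻¹ • (Function.swap dslope z₀)^[j] g z₀ +
        (Function.swap dslope z₀)^[w] g u := by
  have hu' : u - z₀ ≠ 0 := sub_ne_zero.mpr hu
  conv_lhs => rw [eq_sum_iterate_dslope_add g z₀ u w]
  rw [smul_add, smul_sum, smul_smul, inv_mul_cancel₀ (pow_ne_zero w hu'), one_smul]
  congr 1
  refine sum_congr rfl fun j hj => ?_
  rw [smul_smul, pow_sub₀ _ hu' (mem_range.mp hj).le, mul_inv, inv_inv]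

theorem AnalyticAt.iterate_swap_dslope_self [CompleteSpace 𝕜] [CharZero 𝕜] {g : 𝕜 → 𝕜}
    {z₀ : 𝕜} (hg : AnalyticAt 𝕜 g z₀) (k : ℕ) :
    (Function.swap dslope z₀)^[k] g z₀ = iteratedDeriv k g z₀ / k.factorial := by
  rw [← (hg.hasFPowerSeriesAt.has_fpower_series_iterate_dslope_fslope k).coeff_zero 1,
    ← FormalMultilinearSeries.coeff, FormalMultilinearSeries.coeff_iterate_fslope, zero_add,
    FormalMultilinearSeries.coeff_ofScalars]

end Taylor

theorem DifferentiableOn.iterate_swap_dslope {E : Type*} [NormedAddCommGroup E]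
    [NormedSpace ℂ E] [CompleteSpace E] {g : ℂ → E} {z₀ : ℂ} {U : Set ℂ} (hU : U ∈ 𝓝 z₀)
    (hg : DifferentiableOn ℂ g U) (k : ℕ) :
    DifferentiableOn ℂ ((Function.swap dslope z₀)^[k] g) U := by
  induction k with
  | zero => exact hg
  | succ k ih =>
    rw [Function.iterate_succ_apply']
    exact (Complex.differentiableOn_dslope hU).mpr ih

theorem hasFPowerSeriesOnBall_ofScalars_of_hasSum {𝕜 : Type*} [DenselyNormedField 𝕜]
    {c : ℕ → 𝕜} {F : 𝕜 → 𝕜} {r : ℝ} (hr : 0 < r)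
    (hc : ∀ u : 𝕜, ‖u‖ < r → HasSum (fun n => c n * u ^ n) (F u)) :
    HasFPowerSeriesOnBall F (FormalMultilinearSeries.ofScalars 𝕜 c) 0 (ENNReal.ofReal r) where
  r_le := by
    refine ENNReal.le_of_forall_nnreal_lt fun t ht => ?_
    rw [ENNReal.coe_lt_ofReal] at ht
    obtain ⟨u, htu, hur⟩ := NormedField.exists_lt_norm_lt 𝕜 t.2 ht
    have hlim := (hc u hur).summable.tendsto_atTop_zero.norm
    simp only [norm_mul, norm_pow, norm_zero] at hlim
    simp only [← FormalMultilinearSeries.ofScalars_norm (E := 𝕜) (c := c)] at hlim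
    exact le_trans (by exact_mod_cast htu.le)
      ((FormalMultilinearSeries.ofScalars 𝕜 c).le_radius_of_tendsto (r := ‖u‖₊) hlim)
  r_pos := ENNReal.ofReal_pos.mpr hr
  hasSum {u} hu := by
    rw [Metric.mem_eball, edist_zero_right, ← ofReal_norm, ENNReal.ofReal_lt_ofReal_iff hr] at hu
    simpa [FormalMultilinearSeries.ofScalars_apply_eq, mul_comm] using hc u hu

theorem isBigO_inv_pow_of_hasSum_of_differentiableOn {c : ℕ → ℂ} {F : ℂ → ℂ} {r R ρ : ℝ}
    (hr : 0 < r) (hc : ∀ u : ℂ, ‖u‖ < r → HasSum (fun n => c n * u ^ n) (F u))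
    (hF : DifferentiableOn ℂ F (Metric.ball 0 R)) (hρ : 0 < ρ) (hρR : ρ < R) :
    c =O[atTop] fun n => (ρ ^ n)⁻¹ := by
  obtain ⟨ρ', hρρ', hρ'R⟩ := exists_between hρR
  have hρ' : 0 < ρ' := hρ.trans hρρ'
  have hcauchy := (hF.mono (Metric.closedBall_subset_ball hρ'R)).hasFPowerSeriesOnBall
    (R := ⟨ρ', hρ'.le⟩) hρ'
  have hseries := (hasFPowerSeriesOnBall_ofScalars_of_hasSum hr hc).hasFPowerSeriesAt
    |>.eq_formalMultilinearSeries hcauchy.hasFPowerSeriesAt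
  obtain ⟨C, -, hC⟩ := (FormalMultilinearSeries.ofScalars ℂ c).norm_mul_pow_le_of_lt_radius
    (r := ⟨ρ, hρ.le⟩)
    (hseries ▸ (ENNReal.coe_lt_coe.mpr (Subtype.mk_lt_mk.mpr hρρ')).trans_le hcauchy.r_le)
  refine IsBigO.of_bound C (Eventually.of_forall fun n => ?_)
  specialize hC n
  rw [FormalMultilinearSeries.ofScalars_norm] at hC
  rw [norm_inv, norm_pow, Real.norm_of_nonneg hρ.le, ← div_eq_mul_inv,
    le_div_iff₀ (by positivity)]
  exact hC

theorem hasSum_inv_sub_pow_succ {z u : ℂ} (hz : z ≠ 0) (hu : ‖u‖ < ‖z‖) (m : ℕ) :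
    HasSum (fun n => (-1) ^ (m + 1) * (z ^ (n + m + 1))⁻¹ * (n + m).choose m * u ^ n)
      ((u - z) ^ (m + 1))⁻¹ := by
  have := (Complex.one_div_sub_pow_hasFPowerSeriesOnBall_zero m hz).hasSum (y := u)
    (by rw [Metric.mem_eball, edist_zero_right, ← ofReal_norm, ← ofReal_norm]
        exact ENNReal.ofReal_lt_ofReal_iff_of_nonneg (norm_nonneg _) |>.mpr hu)
  simp only [FormalMultilinearSeries.ofScalars_apply_eq, smul_eq_mul, zero_add] at this
  have hsign : ((u - z) ^ (m + 1))⁻¹ = (-1) ^ (m + 1) * (1 / (z - u) ^ (m + 1)) := by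
    rw [← neg_sub z u, neg_pow, mul_inv, ← inv_pow (-1), inv_neg, inv_one, one_div]
  rw [hsign]
  exact (this.mul_left _).congr_fun fun n => by rw [add_comm n m]; ring

theorem hasSum_sum_inv_sub_pow_mul {z u : ℂ} (hz : z ≠ 0) (hu : ‖u‖ < ‖z‖) (c : ℕ → ℂ)
    (w : ℕ) :
    HasSum (fun n => (∑ j ∈ range w, c j *
        ((-1) ^ (w - j) * (z ^ (n + (w - j)))⁻¹ * (n + (w - j - 1)).choose (w - j - 1))) * u ^ n)
      (∑ j ∈ range w, ((u - z) ^ (w - j))⁻¹ * c j) := by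
  simp_rw [sum_mul]
  refine hasSum_sum fun j hj => ?_
  obtain ⟨m, hm⟩ : ∃ m, w - j = m + 1 := ⟨w - j - 1, by grind⟩
  simp only [hm, add_tsub_cancel_right, ← add_assoc, mul_assoc]
  exact (hasSum_inv_sub_pow_succ hz hu m).mul_right (c j) |>.congr_fun fun n => by ring

theorem isBigO_coeff_sub_principalPart {R ρ : ℝ} {z₀ : ℂ} (hz₀ : z₀ ≠ 0) (hz₀R : ‖z₀‖ < R)
    (hρ : 0 < ρ) (hρR : ρ < R) {w : ℕ} {b : ℕ → ℂ} {f g h : ℂ → ℂ}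
    (hf : ∀ u : ℂ, ‖u‖ < ‖z₀‖ → HasSum (fun n => b n * u ^ n) (f u))
    (hg : DifferentiableOn ℂ g (Metric.ball 0 R)) (hh : DifferentiableOn ℂ h (Metric.ball 0 R))
    (heq : ∀ u : ℂ, ‖u‖ < ‖z₀‖ → f u = g u * ((u - z₀) ^ w)⁻¹ + h u) :
    (fun n => b n - ∑ j ∈ range w, iteratedDeriv j g z₀ / j.factorial *
        ((-1) ^ (w - j) * (z₀ ^ (n + (w - j)))⁻¹ * (n + (w - j - 1)).choose (w - j - 1)))
      =O[atTop] fun n => (ρ ^ n)⁻¹ := by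
  have hball : Metric.ball (0 : ℂ) R ∈ 𝓝 z₀ :=
    Metric.isOpen_ball.mem_nhds (mem_ball_zero_iff.mpr hz₀R)
  have hg₀ : AnalyticAt ℂ g z₀ := hg.analyticAt hball
  refine isBigO_inv_pow_of_hasSum_of_differentiableOn (norm_pos_iff.mpr hz₀) (fun u hu => ?_)
    (hh.add (hg.iterate_swap_dslope hball w)) hρ hρR
  have hu₀ : u ≠ z₀ := by rintro rfl; exact hu.false
  have hsplit := inv_pow_smul_eq_sum_add_iterate_dslope g hu₀ w
  simp only [smul_eq_mul, hg₀.iterate_swap_dslope_self] at hsplit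
  have hremainder : f u - ∑ j ∈ range w, ((u - z₀) ^ (w - j))⁻¹ *
      (iteratedDeriv j g z₀ / j.factorial) = h u + (Function.swap dslope z₀)^[w] g u := by
    rw [heq u hu, mul_comm, hsplit]; ring
  have := (hf u hu).sub
    (hasSum_sum_inv_sub_pow_mul hz₀ hu (fun j => iteratedDeriv j g z₀ / j.factorial) w)
  rw [hremainder] at this
  exact this.congr_fun fun n => sub_mul _ _ _

theorem sum_principalPart_coeff_eq (t : ℂ) (d : ℕ → ℂ) {w : ℕ} (hw : 0 < w) (n : ℕ) :
    t ^ n * ((∑ j ∈ range (w - 1), (-1) ^ (w - j) * d j / (j.factorial * (w - j - 1).factorial) *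
          (∏ k ∈ Icc 1 (w - j - 1), ((n : ℂ) + k)) * t ^ (w - j)) -
        d (w - 1) / ((w - 1).factorial : ℕ) * t) =
      ∑ j ∈ range w, d j / j.factorial *
        ((-1) ^ (w - j) * (t⁻¹ ^ (n + (w - j)))⁻¹ * (n + (w - j - 1)).choose (w - j - 1)) := by
  obtain ⟨v, rfl⟩ : ∃ v, w = v + 1 := ⟨w - 1, by omega⟩
  have hprod (m : ℕ) : (∏ k ∈ Icc 1 m, ((n : ℂ) + k)) = (n + m).choose m * m.factorial := by
    exact_mod_cast (Nat.choose_mul_factorial_eq_prod_Icc n m).symm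
  rw [sum_range_succ, add_tsub_cancel_right, mul_sub, mul_sum, sub_eq_add_neg]
  congr 1
  · refine sum_congr rfl fun j _ => ?_
    rw [hprod, inv_pow, inv_inv, pow_add]
    have hfact : ((v + 1 - j - 1).factorial : ℂ) ≠ 0 := by exact_mod_cast Nat.factorial_ne_zero _
    field_simp
  · simp only [add_tsub_cancel_left, pow_one, inv_pow, inv_inv, tsub_self, add_zero,
      Nat.choose_zero_right, Nat.cast_one]
    ring

theorem stmt5_general (q a δ : ℝ) (hq : 2 ≤ q) (hδ : 0 < δ)
    (w : ℕ) (hw : 0 < w)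
    (b : ℕ → ℂ) (f g h : ℂ → ℂ)
    (hf : ∀ u : ℂ, ‖u‖ < q ^ (-a) → HasSum (fun n : ℕ => b n * u ^ n) (f u))
    (hg : ∀ u : ℂ, ‖u‖ < q ^ (-(a - δ)) → DifferentiableAt ℂ g u)
    (hh : ∀ u : ℂ, ‖u‖ < q ^ (-(a - δ)) → DifferentiableAt ℂ h u)
    (heq : ∀ u : ℂ, ‖u‖ < q ^ (-a) →
      f u = g u * ((u - ((q ^ (-a) : ℝ) : ℂ)) ^ w)⁻¹ + h u) :
    ∀ ε > (0 : ℝ),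
      (fun n : ℕ => b n - ((q ^ (a * (n : ℝ)) : ℝ) : ℂ) *
          ((∑ j ∈ Finset.range (w - 1),
              (-1 : ℂ) ^ (w - j) * iteratedDeriv j g ((q ^ (-a) : ℝ) : ℂ) /
                  ((j.factorial : ℂ) * ((w - j - 1).factorial : ℂ)) *
                (∏ k ∈ Finset.Icc 1 (w - j - 1), ((n : ℂ) + (k : ℂ))) *
                ((q ^ (a * ((w - j : ℕ) : ℝ)) : ℝ) : ℂ)) -
            iteratedDeriv (w - 1) g ((q ^ (-a) : ℝ) : ℂ) / (((w - 1).factorial : ℕ) : ℂ) *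
              ((q ^ a : ℝ) : ℂ)))
        =O[atTop] (fun n : ℕ => (q ^ ((a - δ + ε) * (n : ℝ)) : ℝ)) := by
  intro ε hε
  have hq₀ : 0 < q := by linarith
  have hq₁ : 1 < q := by linarith
  have hpow (c : ℝ) (m : ℕ) : q ^ (c * m) = (q ^ c) ^ m := by
    rw [Real.rpow_mul hq₀.le, Real.rpow_natCast]
  have hz₀ : ((q ^ (-a) : ℝ) : ℂ) = ((q ^ a : ℝ) : ℂ)⁻¹ := by
    rw [Real.rpow_neg hq₀.le, Complex.ofReal_inv]
  have hnorm : ‖((q ^ (-a) : ℝ) : ℂ)‖ = q ^ (-a) := by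
    rw [Complex.norm_real, Real.norm_of_nonneg (Real.rpow_nonneg hq₀.le _)]
  have hmain := isBigO_coeff_sub_principalPart (R := q ^ (-(a - δ))) (ρ := q ^ (-(a - δ + ε)))
    (Complex.ofReal_ne_zero.mpr (by positivity))
    (hnorm.trans_lt (Real.rpow_lt_rpow_of_exponent_lt hq₁ (by linarith)))
    (by positivity) (Real.rpow_lt_rpow_of_exponent_lt hq₁ (by linarith))
    (fun u hu => hf u (hu.trans_eq hnorm))
    (fun u hu => (hg u (mem_ball_zero_iff.mp hu)).differentiableWithinAt)
    (fun u hu => (hh u (mem_ball_zero_iff.mp hu)).differentiableWithinAt)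
    (fun u hu => heq u (hu.trans_eq hnorm))
  simp only [hpow, Complex.ofReal_pow]
  convert hmain using 2
  · rw [hz₀, sum_principalPart_coeff_eq _ _ hw]
  · rw [Real.rpow_neg hq₀.le, inv_pow, inv_inv]

theorem stmt5 (q a δ : ℝ) (hq : 2 ≤ q) (ha : 0 < a) (hδ : 0 < δ)
    (w : ℕ) (hw : 0 < w)
    (b : ℕ → ℂ) (f g h : ℂ → ℂ)
    (hf : ∀ u : ℂ, ‖u‖ < q ^ (-a) → HasSum (fun n : ℕ => b n * u ^ n) (f u))
    (hg : ∀ u : ℂ, ‖u‖ < q ^ (-(a - δ)) → DifferentiableAt ℂ g u)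
    (hh : ∀ u : ℂ, ‖u‖ < q ^ (-(a - δ)) → DifferentiableAt ℂ h u)
    (heq : ∀ u : ℂ, ‖u‖ < q ^ (-a) →
      f u = g u * ((u - ((q ^ (-a) : ℝ) : ℂ)) ^ w)⁻¹ + h u)
    (hg0 : g ((q ^ (-a) : ℝ) : ℂ) ≠ 0) :
    ∀ ε > (0 : ℝ),
      (fun n : ℕ => b n - ((q ^ (a * (n : ℝ)) : ℝ) : ℂ) *
          ((∑ j ∈ Finset.range (w - 1),
              (-1 : ℂ) ^ (w - j) * iteratedDeriv j g ((q ^ (-a) : ℝ) : ℂ) /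
                  ((j.factorial : ℂ) * ((w - j - 1).factorial : ℂ)) *
                (∏ k ∈ Finset.Icc 1 (w - j - 1), ((n : ℂ) + (k : ℂ))) *
                ((q ^ (a * ((w - j : ℕ) : ℝ)) : ℝ) : ℂ)) -
            iteratedDeriv (w - 1) g ((q ^ (-a) : ℝ) : ℂ) / (((w - 1).factorial : ℕ) : ℂ) *
              ((q ^ a : ℝ) : ℂ)))
        =O[atTop] (fun n : ℕ => (q ^ ((a - δ + ε) * (n : ℝ)) : ℝ)) :=
  stmt5_general q a δ hq hδ w hw b f g h hf hg hh heq
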